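/- arXiv:1804.09967 — 3 statements merged into one kernel-verified Lean document; each statement's English description precedes it below -/
import Mathlib

section
/- The averaging map P_H minimizes relative entropy to the invariant set: for any state ρ and any H-invariant state σ, S(ρ‖P_H(ρ)) ≤ S(ρ‖σ), with P_H(ρ) the unique minimizer. -/
open Matrix MeasureTheory
open scoped ComplexOrder

attribute [local instance] Matrix.normedAddCommGroup Matrix.normedSpace

/-- Logarithm of a Hermitian matrix, via its spectral decomposition. -/
noncomputable def matLog {n : ℕ} (A : Matrix (Fin n) (Fin n) ℂ)
    (hA : A.IsHermitian) : Matrix (Fin n) (Fin n) ℂ :=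
  (hA.eigenvectorUnitary : Matrix (Fin n) (Fin n) ℂ) *
    Matrix.diagonal (fun i => (Real.log (hA.eigenvalues i) : ℂ)) *
    (hA.eigenvectorUnitary : Matrix (Fin n) (Fin n) ℂ)ᴴ

/-- Quantum relative entropy `S(ρ‖σ) = tr(ρ log ρ) − tr(ρ log σ)`. -/
noncomputable def relEnt {n : ℕ} (ρ σ : Matrix (Fin n) (Fin n) ℂ)
    (hρ : ρ.IsHermitian) (hσ : σ.IsHermitian) : ℝ :=
  ((ρ * matLog ρ hρ - ρ * matLog σ hσ).trace).re

/-!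
Write `P` for the twirl of `ρ`. Left invariance of the Haar measure makes `P` commute with every
`U h`, and cycling the trace gives `tr (P L) = tr (ρ L)` for every `L` commuting with all `U h`.
Since the functional calculus preserves commutation, `log σ` and `log P` are such `L`, whence the
Pythagorean identity `S(ρ‖σ) = S(ρ‖P) + S(P‖σ)`. It remains to show Klein's inequality
`S(P‖σ) ≥ 0`, with equality only for `P = σ`. Expanding both logarithms in the eigenbases `v` of `P`
and `w` of `σ`, the weights `|⟨vᵢ, wⱼ⟩|²` form a doubly stochastic matrix, and (as the traces agree)
`S(P‖σ)` becomes a sum of terms `|⟨vᵢ, wⱼ⟩|² · qⱼ · klFun (pᵢ / qⱼ) ≥ 0`, where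
`klFun x = x log x + 1 - x` vanishes only at `x = 1`.
-/

theorem InformationTheory.mul_klFun_div {x y : ℝ} (hx : 0 ≤ x) (hy : 0 < y) :
    y * klFun (x / y) = x * Real.log x - x * Real.log y + (y - x) := by
  rcases hx.eq_or_lt with rfl | hx
  · simp [klFun]
  · rw [klFun, Real.log_div hx.ne' hy.ne']
    field_simp
    ring

namespace Matrix

variable {ι 𝕜 : Type*} [Fintype ι] [DecidableEq ι] [RCLike 𝕜]

theorem sum_norm_sq_row_of_mem_unitaryGroup {U : Matrix ι ι 𝕜} (hU : U ∈ unitaryGroup ι 𝕜)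
    (i : ι) : ∑ j, ‖U i j‖ ^ 2 = 1 := by
  have h := congr_fun₂ (mem_unitaryGroup_iff.mp hU) i i
  simp only [mul_apply, star_apply, RCLike.star_def, RCLike.mul_conj, one_apply_eq] at h
  exact_mod_cast h

theorem sum_norm_sq_col_of_mem_unitaryGroup {U : Matrix ι ι 𝕜} (hU : U ∈ unitaryGroup ι 𝕜)
    (j : ι) : ∑ i, ‖U i j‖ ^ 2 = 1 := by
  simpa [star_apply] using sum_norm_sq_row_of_mem_unitaryGroup (Unitary.star_mem hU) j

theorem trace_diagonal_mul_mul_diagonal_mul_conjTranspose (a d : ι → ℝ) (M : Matrix ι ι 𝕜) :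
    (diagonal (RCLike.ofReal ∘ a) * M * diagonal (RCLike.ofReal ∘ d) * Mᴴ).trace
      = ((∑ i, ∑ j, ‖M i j‖ ^ 2 * (a i * d j) : ℝ) : 𝕜) := by
  push_cast
  refine Finset.sum_congr rfl fun i _ => ?_
  rw [diag_apply, mul_apply]
  refine Finset.sum_congr rfl fun j _ => ?_
  rw [mul_diagonal, diagonal_mul, conjTranspose_apply, ← RCLike.mul_conj, RCLike.star_def]
  simp only [Function.comp_apply]
  ring

end Matrix

namespace Matrix.IsHermitian

open Unitary

variable {ι 𝕜 : Type*} [Fintype ι] [DecidableEq ι] [RCLike 𝕜] {A B : Matrix ι ι 𝕜}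

/-- `eigenOverlap hA hB i j = |⟨vᵢ, wⱼ⟩|²` for the eigenbases `v` of `A` and `w` of `B`. -/
noncomputable def eigenOverlap (hA : A.IsHermitian) (hB : B.IsHermitian) (i j : ι) : ℝ :=
  ‖((star hA.eigenvectorUnitary * hB.eigenvectorUnitary : unitaryGroup ι 𝕜) : Matrix ι ι 𝕜) i j‖ ^ 2

variable (hA : A.IsHermitian) (hB : B.IsHermitian)

theorem eigenOverlap_nonneg (i j : ι) : 0 ≤ hA.eigenOverlap hB i j := sq_nonneg _

theorem sum_eigenOverlap_right (i : ι) : ∑ j, hA.eigenOverlap hB i j = 1 :=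
  sum_norm_sq_row_of_mem_unitaryGroup (SetLike.coe_mem _) i

theorem sum_eigenOverlap_left (j : ι) : ∑ i, hA.eigenOverlap hB i j = 1 :=
  sum_norm_sq_col_of_mem_unitaryGroup (SetLike.coe_mem _) j

theorem eigenOverlap_self (i j : ι) : hA.eigenOverlap hA i j = if i = j then 1 else 0 := by
  rw [eigenOverlap, star_mul_self, OneMemClass.coe_one, one_apply]
  split_ifs <;> simp

theorem trace_mul_cfc (f : ℝ → ℝ) :
    (A * cfc f B).trace
      = ((∑ i, ∑ j, hA.eigenOverlap hB i j * (hA.eigenvalues i * f (hB.eigenvalues j)) : ℝ) :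
          𝕜) := by
  set V : Matrix ι ι 𝕜 := (hA.eigenvectorUnitary : Matrix ι ι 𝕜)
  set W : Matrix ι ι 𝕜 := (hB.eigenvectorUnitary : Matrix ι ι 𝕜)
  have hA' : A = V * diagonal (RCLike.ofReal ∘ hA.eigenvalues) * star V := hA.spectral_theorem
  calc (A * cfc f B).trace
      = (V * (diagonal (RCLike.ofReal ∘ hA.eigenvalues) * star V * W *
          diagonal (RCLike.ofReal ∘ f ∘ hB.eigenvalues) * star W)).trace := by
        rw [hB.cfc_eq, IsHermitian.cfc, conjStarAlgAut_apply]
        conv_lhs => rw [hA']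
        simp only [mul_assoc]
        rfl
    _ = (diagonal (RCLike.ofReal ∘ hA.eigenvalues) * (star V * W) *
          diagonal (RCLike.ofReal ∘ f ∘ hB.eigenvalues) * (star V * W)ᴴ).trace := by
        rw [trace_mul_comm, conjTranspose_mul, ← star_eq_conjTranspose, ← star_eq_conjTranspose,
          star_star]
        simp only [mul_assoc]
    _ = _ := by
        rw [trace_diagonal_mul_mul_diagonal_mul_conjTranspose]
        rfl

theorem re_trace_sub_trace :
    RCLike.re (B.trace - A.trace)
      = ∑ i, ∑ j, hA.eigenOverlap hB i j * (hB.eigenvalues j - hA.eigenvalues i) := by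
  simp only [mul_sub, Finset.sum_sub_distrib, ← Finset.sum_mul]
  rw [Finset.sum_comm]
  simp only [← Finset.sum_mul, sum_eigenOverlap_left, sum_eigenOverlap_right, one_mul,
    hA.trace_eq_sum_eigenvalues, hB.trace_eq_sum_eigenvalues, map_sub, map_sum, RCLike.ofReal_re]

theorem eq_of_eigenOverlap_ne_zero
    (h : ∀ i j, hA.eigenOverlap hB i j ≠ 0 → hA.eigenvalues i = hB.eigenvalues j) : A = B := by
  set M := star hA.eigenvectorUnitary * hB.eigenvectorUnitary
  have hM : diagonal (RCLike.ofReal ∘ hA.eigenvalues) * (M : Matrix ι ι 𝕜)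
      = (M : Matrix ι ι 𝕜) * diagonal (RCLike.ofReal ∘ hB.eigenvalues) := by
    ext i j
    rw [diagonal_mul, mul_diagonal]
    by_cases hij : (M : Matrix ι ι 𝕜) i j = 0
    · simp [hij]
    · rw [Function.comp_apply, Function.comp_apply,
        h i j (pow_ne_zero 2 (norm_ne_zero_iff.mpr hij)), mul_comm]
  have hMD : conjStarAlgAut 𝕜 _ M (diagonal (RCLike.ofReal ∘ hB.eigenvalues))
      = diagonal (RCLike.ofReal ∘ hA.eigenvalues) := by
    rw [conjStarAlgAut_apply, ← hM, mul_assoc, mul_star_self_of_mem M.2, mul_one]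
  have hw : hB.eigenvectorUnitary = hA.eigenvectorUnitary * M := by
    rw [← mul_assoc, mul_star_self, one_mul]
  conv_rhs => rw [hB.spectral_theorem, hw, conjStarAlgAut_mul_apply, hMD]
  exact hA.spectral_theorem

end Matrix.IsHermitian

section RelativeEntropy

open InformationTheory

variable {n : ℕ} {A B : Matrix (Fin n) (Fin n) ℂ}

theorem matLog_eq_cfc (hA : A.IsHermitian) : matLog A hA = cfc Real.log A := by
  rw [hA.cfc_eq]
  rfl

theorem Commute.matLog {u : Matrix (Fin n) (Fin n) ℂ} (hA : A.IsHermitian) (h : Commute u A) :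
    Commute u (matLog A hA) := by
  rw [matLog_eq_cfc]
  exact (h.symm.cfc_real Real.log).symm

theorem relEnt_eq_sum_eigenOverlap (hA : A.IsHermitian) (hB : B.IsHermitian) :
    relEnt A B hA hB = ∑ i, ∑ j, hA.eigenOverlap hB i j *
      (hA.eigenvalues i * Real.log (hA.eigenvalues i)
        - hA.eigenvalues i * Real.log (hB.eigenvalues j)) := by
  have hAA : (A * matLog A hA).trace.re
      = ∑ i, ∑ j, hA.eigenOverlap hB i j * (hA.eigenvalues i * Real.log (hA.eigenvalues i)) := by
    rw [matLog_eq_cfc, hA.trace_mul_cfc hA, RCLike.ofReal_eq_complex_ofReal, Complex.ofReal_re]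
    simp only [hA.eigenOverlap_self, ite_mul, one_mul, zero_mul, Finset.sum_ite_eq,
      Finset.mem_univ, if_true, ← Finset.sum_mul, hA.sum_eigenOverlap_right]
  rw [relEnt, trace_sub, Complex.sub_re, hAA, matLog_eq_cfc hB, hA.trace_mul_cfc hB,
    RCLike.ofReal_eq_complex_ofReal, Complex.ofReal_re, ← Finset.sum_sub_distrib]
  simp only [← Finset.sum_sub_distrib, mul_sub]

theorem relEnt_add_re_trace_sub_eq_sum_klFun (hA : A.PosSemidef) (hB : B.PosDef) :
    relEnt A B hA.1 hB.1 + (B.trace - A.trace).re = ∑ i, ∑ j, hA.1.eigenOverlap hB.1 i j *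
      (hB.1.eigenvalues j * klFun (hA.1.eigenvalues i / hB.1.eigenvalues j)) := by
  rw [relEnt_eq_sum_eigenOverlap, ← RCLike.re_to_complex, hA.1.re_trace_sub_trace hB.1,
    ← Finset.sum_add_distrib]
  refine Finset.sum_congr rfl fun i _ => ?_
  rw [← Finset.sum_add_distrib]
  refine Finset.sum_congr rfl fun j _ => ?_
  rw [mul_klFun_div (hA.eigenvalues_nonneg i) (hB.eigenvalues_pos j)]
  ring

theorem relEnt_eq_sum_klFun (hA : A.PosSemidef) (hB : B.PosDef) (htr : A.trace = B.trace) :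
    relEnt A B hA.1 hB.1 = ∑ i, ∑ j, hA.1.eigenOverlap hB.1 i j *
      (hB.1.eigenvalues j * klFun (hA.1.eigenvalues i / hB.1.eigenvalues j)) := by
  rw [← relEnt_add_re_trace_sub_eq_sum_klFun hA hB, htr, sub_self, Complex.zero_re, add_zero]

theorem eigenOverlap_mul_klFun_nonneg (hA : A.PosSemidef) (hB : B.PosDef) (i j : Fin n) :
    0 ≤ hA.1.eigenOverlap hB.1 i j *
      (hB.1.eigenvalues j * klFun (hA.1.eigenvalues i / hB.1.eigenvalues j)) :=
  mul_nonneg (hA.1.eigenOverlap_nonneg hB.1 i j) (mul_nonneg (hB.eigenvalues_pos j).le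
    (klFun_nonneg (div_nonneg (hA.eigenvalues_nonneg i) (hB.eigenvalues_pos j).le)))

/-- Klein's inequality. -/
theorem relEnt_nonneg (hA : A.PosSemidef) (hB : B.PosDef) (htr : A.trace = B.trace) :
    0 ≤ relEnt A B hA.1 hB.1 := by
  rw [relEnt_eq_sum_klFun hA hB htr]
  exact Finset.sum_nonneg fun i _ => Finset.sum_nonneg fun j _ =>
    eigenOverlap_mul_klFun_nonneg hA hB i j

theorem eq_of_relEnt_eq_zero (hA : A.PosSemidef) (hB : B.PosDef) (htr : A.trace = B.trace)
    (h : relEnt A B hA.1 hB.1 = 0) : A = B := by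
  rw [relEnt_eq_sum_klFun hA hB htr] at h
  refine hA.1.eq_of_eigenOverlap_ne_zero hB.1 fun i j hij => ?_
  have hnonneg := eigenOverlap_mul_klFun_nonneg hA hB
  have hrow := (Finset.sum_eq_zero_iff_of_nonneg fun i _ =>
    Finset.sum_nonneg fun j _ => hnonneg i j).mp h i (Finset.mem_univ i)
  have hterm := (Finset.sum_eq_zero_iff_of_nonneg fun j _ => hnonneg i j).mp hrow j
    (Finset.mem_univ j)
  have hb := hB.eigenvalues_pos j
  rw [mul_eq_zero, mul_eq_zero, or_iff_right hij, or_iff_right hb.ne',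
    klFun_eq_zero_iff (div_nonneg (hA.eigenvalues_nonneg i) hb.le),
    div_eq_one_iff_eq hb.ne'] at hterm
  exact hterm

end RelativeEntropy

theorem LinearMap.integral_comp_comm {𝕜 X E F : Type*} [RCLike 𝕜] [MeasurableSpace X]
    {μ : Measure X} [NormedAddCommGroup E] [NormedSpace 𝕜 E] [NormedSpace ℝ E]
    [FiniteDimensional 𝕜 E] [NormedAddCommGroup F] [NormedSpace 𝕜 F] [NormedSpace ℝ F]
    [CompleteSpace F]
    (T : E →ₗ[𝕜] F) {f : X → E} (hf : Integrable f μ) :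
    ∫ x, T (f x) ∂μ = T (∫ x, f x ∂μ) :=
  have := FiniteDimensional.complete 𝕜 E
  (LinearMap.toContinuousLinearMap T).integral_comp_comm hf

/-- Needed for `Integrable` of matrix-valued maps: instance search cannot find it, because the
topology of `Matrix.normedAddCommGroup` agrees with the product topology only up to unfolding. -/
noncomputable abbrev Matrix.continuousENorm {m n α : Type*} [Fintype m] [Fintype n]
    [NormedAddCommGroup α] : ContinuousENorm (Matrix m n α) :=
  SeminormedAddGroup.toContinuousENorm

attribute [local instance] Matrix.continuousENorm

namespace Matrix

variable {X ι : Type*} [MeasurableSpace X] {μ : Measure X} [Fintype ι]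
  {f : X → Matrix ι ι ℂ}

theorem isHermitian_integral (hf : ∀ x, (f x).IsHermitian) : (∫ x, f x ∂μ).IsHermitian := by
  rw [IsHermitian, ← star_eq_conjTranspose]
  calc star (∫ x, f x ∂μ) = starL' ℝ (∫ x, f x ∂μ) := rfl
    _ = ∫ x, starL' ℝ (f x) ∂μ := ((starL' ℝ).integral_comp_comm f).symm
    _ = ∫ x, f x ∂μ := integral_congr_ae (.of_forall fun x => (hf x).eq)

theorem posDef_integral [DecidableEq ι] [NeZero μ] (hf : Integrable f μ)
    (hpos : ∀ x, (f x).PosDef) : (∫ x, f x ∂μ).PosDef := by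
  refine .of_dotProduct_mulVec_pos (isHermitian_integral fun x => (hpos x).1) fun v hv => ?_
  let q : Matrix ι ι ℂ →ₗ[ℂ] ℂ :=
    LinearMap.applyₗ v ∘ₗ LinearMap.applyₗ (star v) ∘ₗ (toLinearMap₂' ℂ).toLinearMap
  have hq (M : Matrix ι ι ℂ) : q M = star v ⬝ᵥ M *ᵥ v := toLinearMap₂'_apply' M _ _
  have hposq (x : X) : 0 < q (f x) := (hq _).symm ▸ (hpos x).dotProduct_mulVec_pos hv
  have hre (x : X) : ((q (f x)).re : ℂ) = q (f x) :=
    Complex.ext rfl (Complex.lt_def.mp (hposq x)).2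
  have hint : Integrable (fun x => (q (f x)).re) μ :=
    ((LinearMap.toContinuousLinearMap q).integrable_comp hf).re
  rw [← hq, ← q.integral_comp_comm hf, ← integral_congr_ae (.of_forall hre),
    integral_complex_ofReal, Complex.zero_lt_real, integral_pos_iff_support_of_nonneg
      (fun x => (Complex.lt_def.mp (hposq x)).1.le) hint]
  rw [Set.eq_univ_of_forall fun x => Function.mem_support.mpr (Complex.lt_def.mp (hposq x)).1.ne']
  exact Measure.measure_univ_pos.mpr (NeZero.ne μ)

end Matrix

section Twirl

variable {K ι : Type*} [Group K] [MeasurableSpace K] [Fintype ι] [DecidableEq ι]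
  {μ : Measure K} {U : K →* unitaryGroup ι ℂ} {ρ : Matrix ι ι ℂ}

noncomputable def twirl (μ : Measure K) (U : K →* unitaryGroup ι ℂ) (ρ : Matrix ι ι ℂ) :
    Matrix ι ι ℂ :=
  ∫ k, (U k : Matrix ι ι ℂ) * ρ * (U k : Matrix ι ι ℂ)ᴴ ∂μ

theorem integrable_unitary_conj [TopologicalSpace K] [CompactSpace K] [OpensMeasurableSpace K]
    [IsFiniteMeasure μ] (hU : Continuous fun k => (U k : Matrix ι ι ℂ)) (ρ : Matrix ι ι ℂ) :
    Integrable (fun k => (U k : Matrix ι ι ℂ) * ρ * (U k : Matrix ι ι ℂ)ᴴ) μ :=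
  ((hU.matrix_mul continuous_const).matrix_mul
    hU.matrix_conjTranspose).integrable_of_hasCompactSupport (.of_compactSpace _)

theorem trace_twirl_mul [IsProbabilityMeasure μ]
    (hint : Integrable (fun k => (U k : Matrix ι ι ℂ) * ρ * (U k : Matrix ι ι ℂ)ᴴ) μ)
    {L : Matrix ι ι ℂ} (hL : ∀ k, Commute (U k : Matrix ι ι ℂ) L) :
    (twirl μ U ρ * L).trace = (ρ * L).trace := by
  have hconst (k : K) : ((U k : Matrix ι ι ℂ) * ρ * (U k : Matrix ι ι ℂ)ᴴ * L).trace
      = (ρ * L).trace := by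
    simp only [mul_assoc]
    rw [trace_mul_comm]
    simp only [mul_assoc]
    rw [← (hL k).eq, ← mul_assoc _ (U k : Matrix ι ι ℂ), ← star_eq_conjTranspose,
      Unitary.coe_star_mul_self, one_mul]
  calc (twirl μ U ρ * L).trace
      = ∫ k, ((U k : Matrix ι ι ℂ) * ρ * (U k : Matrix ι ι ℂ)ᴴ * L).trace ∂μ :=
        ((traceLinearMap ι ℂ ℂ ∘ₗ LinearMap.mulRight ℂ L).integral_comp_comm hint).symm
    _ = (ρ * L).trace := by simp [hconst]

theorem trace_twirl [IsProbabilityMeasure μ]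
    (hint : Integrable (fun k => (U k : Matrix ι ι ℂ) * ρ * (U k : Matrix ι ι ℂ)ᴴ) μ) :
    (twirl μ U ρ).trace = ρ.trace := by
  simpa using trace_twirl_mul hint fun k => Commute.one_right _

theorem posDef_twirl [NeZero μ]
    (hint : Integrable (fun k => (U k : Matrix ι ι ℂ) * ρ * (U k : Matrix ι ι ℂ)ᴴ) μ)
    (hρ : ρ.PosDef) : (twirl μ U ρ).PosDef :=
  posDef_integral hint fun k => by
    simpa only [Unitary.coe_star, star_eq_conjTranspose, conjTranspose_conjTranspose] using
      hρ.conjTranspose_mul_mul_same (B := (star (U k) : unitaryGroup ι ℂ))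
      (mulVec_injective_of_isUnit Unitary.isUnit_coe)

theorem commute_twirl [MeasurableMul K] [μ.IsMulLeftInvariant] (g : K) :
    Commute (U g : Matrix ι ι ℂ) (twirl μ U ρ) := by
  refine (commute_unitary_iff_star_right_conjugate (U g).2).mpr ?_
  let c := (Unitary.conjStarAlgAut ℂ (Matrix ι ι ℂ) (U g)).toAlgEquiv.toLinearEquiv
    |>.toContinuousLinearEquiv
  have hc (k : K) : c ((U k : Matrix ι ι ℂ) * ρ * (U k : Matrix ι ι ℂ)ᴴ)
      = (U (g * k) : Matrix ι ι ℂ) * ρ * (U (g * k) : Matrix ι ι ℂ)ᴴ := by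
    change (U g : Matrix ι ι ℂ) * (U k * ρ * (U k : Matrix ι ι ℂ)ᴴ) * star (U g : Matrix ι ι ℂ)
      = _
    rw [map_mul, Submonoid.coe_mul, conjTranspose_mul, star_eq_conjTranspose]
    simp only [mul_assoc]
  calc (U g : Matrix ι ι ℂ) * twirl μ U ρ * star (U g : Matrix ι ι ℂ) = c (twirl μ U ρ) := rfl
    _ = ∫ k, (U (g * k) : Matrix ι ι ℂ) * ρ * (U (g * k) : Matrix ι ι ℂ)ᴴ ∂μ :=
        (c.integral_comp_comm _).symm.trans (integral_congr_ae (.of_forall hc))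
    _ = twirl μ U ρ :=
        integral_mul_left_eq_self (fun k => (U k : Matrix ι ι ℂ) * ρ * (U k : Matrix ι ι ℂ)ᴴ) g

end Twirl

theorem relEnt_eq_relEnt_twirl_add_relEnt {K : Type*} [Group K] [MeasurableSpace K]
    {μ : Measure K} [IsProbabilityMeasure μ] [MeasurableMul K]
    [μ.IsMulLeftInvariant] {n : ℕ} {U : K →* unitaryGroup (Fin n) ℂ}
    {ρ σ : Matrix (Fin n) (Fin n) ℂ}
    (hint : Integrable (fun k => (U k : Matrix (Fin n) (Fin n) ℂ) * ρ *
      (U k : Matrix (Fin n) (Fin n) ℂ)ᴴ) μ)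
    (hρ : ρ.IsHermitian) (hσ : σ.IsHermitian) (hP : (twirl μ U ρ).IsHermitian)
    (hσinv : ∀ k, Commute (U k : Matrix (Fin n) (Fin n) ℂ) σ) :
    relEnt ρ σ hρ hσ = relEnt ρ (twirl μ U ρ) hρ hP + relEnt (twirl μ U ρ) σ hP hσ := by
  have hlogσ := trace_twirl_mul hint fun k => (hσinv k).matLog hσ
  have hlogP := trace_twirl_mul hint fun k => (commute_twirl k).matLog hP
  simp only [relEnt, trace_sub, Complex.sub_re, hlogσ, hlogP]
  ring

/-- The Haar-averaging map `P_H(ρ) = ∫_H U(h) ρ U(h)† dh` minimizes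
the relative entropy to the `H`-invariant states: for any state `ρ` and any
`H`-invariant state `σ`, `S(ρ‖P_H(ρ)) ≤ S(ρ‖σ)`, and `P_H(ρ)` is the unique
minimizer. -/
theorem average_minimizes_relative_entropy {G : Type*} [Group G]
    (H : Subgroup G)
    [TopologicalSpace H] [IsTopologicalGroup H] [CompactSpace H]
    [MeasurableSpace H] [BorelSpace H]
    (μ : Measure H) [μ.IsHaarMeasure] [IsProbabilityMeasure μ]
    {n : ℕ} (U : G →* Matrix.unitaryGroup (Fin n) ℂ)
    (hcont : Continuous fun h : H => (U (h : G) : Matrix (Fin n) (Fin n) ℂ))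
    (ρ σ : Matrix (Fin n) (Fin n) ℂ)
    (hρ : ρ.PosDef) (hρtr : ρ.trace = 1)
    (hσ : σ.PosDef) (hσtr : σ.trace = 1)
    (hσinv : ∀ h : H, (U (h : G) : Matrix (Fin n) (Fin n) ℂ) * σ *
        (U (h : G) : Matrix (Fin n) (Fin n) ℂ)ᴴ = σ)
    (hPH : (∫ h : H, (U (h : G) : Matrix (Fin n) (Fin n) ℂ) * ρ *
        (U (h : G) : Matrix (Fin n) (Fin n) ℂ)ᴴ ∂μ).IsHermitian) :
    relEnt ρ (∫ h : H, (U (h : G) : Matrix (Fin n) (Fin n) ℂ) * ρ *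
        (U (h : G) : Matrix (Fin n) (Fin n) ℂ)ᴴ ∂μ) hρ.1 hPH
      ≤ relEnt ρ σ hρ.1 hσ.1 ∧
    (relEnt ρ σ hρ.1 hσ.1
        = relEnt ρ (∫ h : H, (U (h : G) : Matrix (Fin n) (Fin n) ℂ) * ρ *
            (U (h : G) : Matrix (Fin n) (Fin n) ℂ)ᴴ ∂μ) hρ.1 hPH
      → σ = ∫ h : H, (U (h : G) : Matrix (Fin n) (Fin n) ℂ) * ρ *
            (U (h : G) : Matrix (Fin n) (Fin n) ℂ)ᴴ ∂μ) := by
  let V := U.comp H.subtype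
  show relEnt ρ (twirl μ V ρ) hρ.1 hPH ≤ relEnt ρ σ hρ.1 hσ.1 ∧
    (relEnt ρ σ hρ.1 hσ.1 = relEnt ρ (twirl μ V ρ) hρ.1 hPH → σ = twirl μ V ρ)
  have hint := integrable_unitary_conj (μ := μ) (U := V) hcont ρ
  have hP : (twirl μ V ρ).PosDef := posDef_twirl hint hρ
  have htr : (twirl μ V ρ).trace = σ.trace := by rw [trace_twirl hint, hρtr, hσtr]
  have hpythagoras := relEnt_eq_relEnt_twirl_add_relEnt hint hρ.1 hσ.1 hPH fun h =>
    (commute_unitary_iff_star_right_conjugate (V h).2).mpr (hσinv h)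
  have hklein := relEnt_nonneg hP.posSemidef hσ htr
  exact ⟨by linarith, fun heq => (eq_of_relEnt_eq_zero hP.posSemidef hσ htr (by linarith)).symm⟩
end

section
/- The isotropy group of the Bell state |φ⁺⟩ = (|00⟩ + |11⟩)/√2 under the projective action g ↦ U(g)⊗U(g) of SU(2) is exactly {(iZ)^α e^{iθY} : θ ∈ [0,2π), α ∈ {0,1,2,3}}, i.e. U ∈ SU(2) satisfies U ⊗ U |φ⁺⟩⟨φ⁺| U† ⊗ U† = |φ⁺⟩⟨φ⁺| if and only if U is of this form. -/
/-!
Writing `|φ⁺⟩ = vec 𝟙 / √2`, one has `(U ⊗ U)|φ⁺⟩ = vec (U Uᵀ) / √2`, so `U` fixes the projector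
exactly when `U Uᵀ` is a scalar `c`, and `det U = 1` forces `c = ±1`. If `U Uᵀ = 1`, then
`Uᵀ = U⁻¹ = Uᴴ`, so `U` is a real rotation, i.e. `e^{iθY}`. If `U Uᵀ = -1`, then `iZ · U` is such
a rotation, and `U = (iZ)³ (iZ · U)` because `(iZ)² = -1`.
-/

open Matrix Kronecker

/-- Pauli matrix `Y`. -/
noncomputable def pauliY : Matrix (Fin 2) (Fin 2) ℂ := !![0, -Complex.I; Complex.I, 0]

/-- Pauli matrix `Z`. -/
noncomputable def pauliZ : Matrix (Fin 2) (Fin 2) ℂ := !![1, 0; 0, -1]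

/-- `e^{iθY} = cos θ · 𝟙 + i sin θ · Y` (since `Y² = 𝟙`). -/
noncomputable def expIY (θ : ℝ) : Matrix (Fin 2) (Fin 2) ℂ :=
  (Real.cos θ : ℂ) • (1 : Matrix (Fin 2) (Fin 2) ℂ)
    + ((Real.sin θ : ℂ) * Complex.I) • pauliY

/-- The Bell state `|φ⁺⟩ = (|00⟩ + |11⟩)/√2`. -/
noncomputable def phiPlus : (Fin 2 × Fin 2) → ℂ := fun p =>
  if p.1 = p.2 then (Real.sqrt 2 : ℂ)⁻¹ else 0

/-- The projector `|φ⁺⟩⟨φ⁺|`. -/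
noncomputable def phiPlusProj : Matrix (Fin 2 × Fin 2) (Fin 2 × Fin 2) ℂ :=
  Matrix.vecMulVec phiPlus (star phiPlus)

namespace Matrix

theorem exists_eq_smul_of_vecMulVec_star_eq {K ι : Type*} [Field K] [StarRing K] {x y : ι → K}
    (h : vecMulVec x (star x) = vecMulVec y (star y)) : ∃ c : K, x = c • y := by
  by_cases hx : x = 0
  · exact ⟨0, by simp [hx]⟩
  obtain ⟨q, hq⟩ := Function.ne_iff.mp hx
  have hq' : star (x q) ≠ 0 := star_ne_zero.mpr hq
  refine ⟨star (y q) / star (x q), funext fun p => ?_⟩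
  have hpq := congrFun (congrFun h p) q
  simp only [vecMulVec_apply, Pi.star_apply] at hpq
  simp only [Pi.smul_apply, smul_eq_mul]
  field_simp
  linear_combination hpq

theorem mul_vecMulVec_star_mul_conjTranspose {α m n : Type*} [Fintype n] [CommSemiring α]
    [StarRing α] (M : Matrix m n α) (v : n → α) :
    M * vecMulVec v (star v) * Mᴴ = vecMulVec (M *ᵥ v) (star (M *ᵥ v)) := by
  rw [mul_vecMulVec, vecMulVec_mul, star_mulVec]

theorem conjTranspose_eq_transpose_of_mul_transpose_eq_one {α n : Type*} [Fintype n]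
    [DecidableEq n] [CommRing α] [StarRing α] {U : Matrix n n α} (hU : U ∈ unitaryGroup n α)
    (hT : U * Uᵀ = 1) : Uᴴ = Uᵀ := by
  calc Uᴴ = Uᴴ * (U * Uᵀ) := by rw [hT, mul_one]
    _ = Uᵀ := by
      rw [← mul_assoc, ← star_eq_conjTranspose, Unitary.star_mul_self_of_mem hU, one_mul]

theorem eq_of_det_eq_one_of_mul_transpose_eq_one {R : Type*} [CommRing R]
    {U : Matrix (Fin 2) (Fin 2) R} (hdet : U.det = 1) (hT : U * Uᵀ = 1) :
    U = !![U 0 0, U 0 1; -U 0 1, U 0 0] := by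
  have hadj : Uᵀ = adjugate U := by
    rw [← inv_eq_right_inv hT, inv_def, hdet, Ring.inverse_one, one_smul]
  have h10 : U 1 0 = -U 0 1 := by simpa [adjugate_fin_two] using congrFun₂ hadj 0 1
  have h11 : U 1 1 = U 0 0 := by simpa [adjugate_fin_two] using congrFun₂ hadj 1 1
  ext i j
  fin_cases i <;> fin_cases j <;> simp [h10, h11]

end Matrix

theorem Real.exists_mem_Ico_cos_sin_eq {x y : ℝ} (h : x ^ 2 + y ^ 2 = 1) :
    ∃ θ ∈ Set.Ico 0 (2 * Real.pi), cos θ = x ∧ sin θ = y := by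
  obtain ⟨θ, hθ⟩ := (Complex.norm_eq_one_iff ⟨x, y⟩).mp <| by
    rw [Complex.norm_def, Complex.normSq_mk, ← sq, ← sq, h, Real.sqrt_one]
  refine ⟨toIcoMod two_pi_pos 0 θ, toIcoMod_mem_Ico' two_pi_pos θ, ?_⟩
  rw [← self_sub_toIcoDiv_zsmul, zsmul_eq_mul, cos_sub_int_mul_two_pi, sin_sub_int_mul_two_pi]
  constructor
  · simpa [Complex.exp_re] using congrArg Complex.re hθ
  · simpa [Complex.exp_im] using congrArg Complex.im hθ

open Complex

theorem expIY_eq (θ : ℝ) :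
    expIY θ = !![(Real.cos θ : ℂ), Real.sin θ; -Real.sin θ, Real.cos θ] := by
  ext i j
  fin_cases i <;> fin_cases j <;> simp [expIY, pauliY, one_apply, mul_comm I, mul_assoc]

theorem expIY_mul_transpose (θ : ℝ) : expIY θ * (expIY θ)ᵀ = 1 := by
  rw [expIY_eq]
  ext i j
  fin_cases i <;> fin_cases j <;>
    simp [mul_apply, Fin.sum_univ_two, ← sq, mul_comm, cos_sq_add_sin_sq, sin_sq_add_cos_sq]

theorem transpose_I_smul_pauliZ : (I • pauliZ)ᵀ = I • pauliZ := by
  ext i j; fin_cases i <;> fin_cases j <;> simp [pauliZ]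

theorem I_smul_pauliZ_mul_self : I • pauliZ * I • pauliZ = -1 := by
  ext i j; fin_cases i <;> fin_cases j <;> simp [pauliZ, mul_apply, Fin.sum_univ_two]

theorem I_smul_pauliZ_mem_specialUnitaryGroup :
    I • pauliZ ∈ specialUnitaryGroup (Fin 2) ℂ := by
  refine mem_specialUnitaryGroup_iff.mpr ⟨mem_unitaryGroup_iff.mpr ?_, ?_⟩
  · ext i j; fin_cases i <;> fin_cases j <;> simp [pauliZ, mul_apply, Fin.sum_univ_two]
  · simp [pauliZ, det_fin_two]

theorem phiPlus_eq_smul_vec_one : phiPlus = (Real.sqrt 2 : ℂ)⁻¹ • vec 1 := by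
  ext ⟨i, j⟩
  simp [phiPlus, one_apply, eq_comm]

theorem kronecker_mulVec_phiPlus (U : Matrix (Fin 2) (Fin 2) ℂ) :
    (U ⊗ₖ U) *ᵥ phiPlus = (Real.sqrt 2 : ℂ)⁻¹ • vec (U * Uᵀ) := by
  rw [phiPlus_eq_smul_vec_one, mulVec_smul, kronecker_mulVec_vec, mul_one]

theorem kronecker_conj_phiPlusProj_eq_iff {U : Matrix (Fin 2) (Fin 2) ℂ} (hdet : U.det = 1) :
    (U ⊗ₖ U) * phiPlusProj * (U ⊗ₖ U)ᴴ = phiPlusProj ↔ U * Uᵀ = 1 ∨ U * Uᵀ = -1 := by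
  have hs : (Real.sqrt 2 : ℂ)⁻¹ ≠ 0 := by simp
  rw [phiPlusProj, mul_vecMulVec_star_mul_conjTranspose, kronecker_mulVec_phiPlus,
    phiPlus_eq_smul_vec_one]
  constructor
  · intro h
    obtain ⟨c, hc⟩ := exists_eq_smul_of_vecMulVec_star_eq h
    rw [smul_comm, ← vec_smul, ← vec_smul, ← vec_smul] at hc
    have hUc : U * Uᵀ = c • 1 := vec_inj.mp ((smul_right_injective _ hs) hc)
    have hc2 : c ^ 2 = 1 := by
      simpa [hdet] using (congrArg det hUc).symm
    rcases sq_eq_one_iff.mp hc2 with rfl | rfl <;> simp [hUc]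
  · rintro (h | h) <;> simp [h, vec_neg]

theorem exists_eq_expIY_of_mul_transpose_eq_one {U : Matrix (Fin 2) (Fin 2) ℂ}
    (hU : U ∈ specialUnitaryGroup (Fin 2) ℂ) (hT : U * Uᵀ = 1) :
    ∃ θ ∈ Set.Ico 0 (2 * Real.pi), U = expIY θ := by
  obtain ⟨hunit, hdet⟩ := mem_specialUnitaryGroup_iff.mp hU
  have hreal (i j : Fin 2) : U i j = ((U i j).re : ℂ) := by
    have h := congrFun₂ (conjTranspose_eq_transpose_of_mul_transpose_eq_one hunit hT) j i
    exact (conj_eq_iff_re.mp h).symm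
  have hsq : (U 0 0).re ^ 2 + (U 0 1).re ^ 2 = 1 := by
    have h := congrFun₂ hT 0 0
    simp only [mul_apply, Fin.sum_univ_two, transpose_apply, one_apply_eq] at h
    rw [hreal 0 0, hreal 0 1] at h
    exact_mod_cast (by linear_combination h : ((U 0 0).re ^ 2 + (U 0 1).re ^ 2 : ℂ) = 1)
  obtain ⟨θ, hθ, hcos, hsin⟩ := Real.exists_mem_Ico_cos_sin_eq hsq
  refine ⟨θ, hθ, ?_⟩
  rw [eq_of_det_eq_one_of_mul_transpose_eq_one hdet hT, expIY_eq, hcos, hsin, ← hreal, ← hreal]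

theorem mul_transpose_eq_one_or_neg_one_iff {U : Matrix (Fin 2) (Fin 2) ℂ}
    (hU : U ∈ specialUnitaryGroup (Fin 2) ℂ) :
    U * Uᵀ = 1 ∨ U * Uᵀ = -1 ↔ ∃ (θ : ℝ) (α : Fin 4), 0 ≤ θ ∧ θ < 2 * Real.pi ∧
      U = (I • pauliZ) ^ (α : ℕ) * expIY θ := by
  have hmul (A B : Matrix (Fin 2) (Fin 2) ℂ) : A * B * (A * B)ᵀ = A * (B * Bᵀ) * Aᵀ := by
    rw [transpose_mul]; simp only [mul_assoc]
  constructor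
  · rintro (h | h)
    · obtain ⟨θ, ⟨h0, h2⟩, rfl⟩ := exists_eq_expIY_of_mul_transpose_eq_one hU h
      exact ⟨θ, 0, h0, h2, by simp⟩
    · have hWU : I • pauliZ * U * (I • pauliZ * U)ᵀ = 1 := by
        rw [hmul, h, transpose_I_smul_pauliZ, mul_neg_one, neg_mul, I_smul_pauliZ_mul_self,
          neg_neg]
      obtain ⟨θ, ⟨h0, h2⟩, hθ⟩ := exists_eq_expIY_of_mul_transpose_eq_one
        (mul_mem I_smul_pauliZ_mem_specialUnitaryGroup hU) hWU
      have hW4 : (I • pauliZ) ^ 4 = 1 := by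
        rw [show 4 = 2 * 2 from rfl, pow_mul, sq (I • pauliZ), I_smul_pauliZ_mul_self, neg_one_sq]
      refine ⟨θ, 3, h0, h2, ?_⟩
      rw [← hθ, ← mul_assoc, ← pow_succ]
      change U = (I • pauliZ) ^ 4 * U
      rw [hW4, one_mul]
  · rintro ⟨θ, α, -, -, rfl⟩
    rw [hmul, expIY_mul_transpose, mul_one, transpose_pow, transpose_I_smul_pauliZ,
      ← (Commute.refl _).mul_pow, I_smul_pauliZ_mul_self]
    exact neg_one_pow_eq_or _ _

/-- The isotropy group of `|φ⁺⟩⟨φ⁺|` under the action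
`ρ ↦ (U⊗U) ρ (U⊗U)†` of `SU(2)` is exactly
`{(iZ)^α e^{iθY} : θ ∈ [0,2π), α ∈ {0,1,2,3}}`. -/
theorem iso_phiPlus :
    {U : Matrix.specialUnitaryGroup (Fin 2) ℂ |
        ((U : Matrix (Fin 2) (Fin 2) ℂ) ⊗ₖ (U : Matrix (Fin 2) (Fin 2) ℂ)) * phiPlusProj *
          ((U : Matrix (Fin 2) (Fin 2) ℂ) ⊗ₖ (U : Matrix (Fin 2) (Fin 2) ℂ))ᴴ = phiPlusProj}
      = {U : Matrix.specialUnitaryGroup (Fin 2) ℂ |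
          ∃ (θ : ℝ) (α : Fin 4), 0 ≤ θ ∧ θ < 2 * Real.pi ∧
            (U : Matrix (Fin 2) (Fin 2) ℂ)
              = (Complex.I • pauliZ) ^ (α : ℕ) * expIY θ} := by
  ext U
  rw [Set.mem_ofPred_eq, Set.mem_ofPred_eq,
    kronecker_conj_phiPlusProj_eq_iff (mem_specialUnitaryGroup_iff.mp U.2).2]
  exact mul_transpose_eq_one_or_neg_one_iff U.2
end

section
/- For any cyclic subgroup of the isotropy group of a two-qubit state under the SU(2) tensor product action, generated by a diagonalizable U(g) = e^{iθ}|0⟩⟨0| + e^{−iθ}|1⟩⟨1|, the operator U(g)⊗U(g)⊗U*(g)⊗U*(g) − 𝟙 has eigenvalues only of the form e^{2ikθ} − 1 for k ∈ {−2,−1,0,1,2}; hence any cyclic subgroup of the isotropy group of a two-qubit state is isomorphic to ℤ₂, ℤ₄, or U(1). -/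
open Matrix Kronecker

/-- The diagonal unitary `U(θ) = e^{iθ}|0⟩⟨0| + e^{−iθ}|1⟩⟨1|`. -/
noncomputable def Udiag (θ : ℝ) : Matrix (Fin 2) (Fin 2) ℂ :=
  Matrix.diagonal ![Complex.exp (θ * Complex.I), Complex.exp (-θ * Complex.I)]

/-- The operator `U(θ) ⊗ U(θ) ⊗ U*(θ) ⊗ U*(θ)` acting on vectorized two-qubit states. -/
noncomputable def vecAction (θ : ℝ) :
    Matrix ((Fin 2 × Fin 2) × (Fin 2 × Fin 2)) ((Fin 2 × Fin 2) × (Fin 2 × Fin 2)) ℂ :=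
  (Udiag θ ⊗ₖ Udiag θ) ⊗ₖ ((Udiag θ).map star ⊗ₖ (Udiag θ).map star)

def kappa (i : (Fin 2 × Fin 2) × (Fin 2 × Fin 2)) : ℤ :=
  (i.2.1 : ℤ) + (i.2.2 : ℤ) - (i.1.1 : ℤ) - (i.1.2 : ℤ)

lemma kappa_bounds (i : (Fin 2 × Fin 2) × (Fin 2 × Fin 2)) : -2 ≤ kappa i ∧ kappa i ≤ 2 := by
  obtain ⟨⟨a, b⟩, c, d⟩ := i
  have := a.is_le; have := b.is_le; have := c.is_le; have := d.is_le
  unfold kappa; simp only []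
  omega

lemma vecAction_eq_diagonal (θ : ℝ) :
    vecAction θ = Matrix.diagonal (fun i => Complex.exp (2 * kappa i * θ * Complex.I)) := by
  have hmap : (Udiag θ).map star =
      Matrix.diagonal ![Complex.exp (-θ * Complex.I), Complex.exp (θ * Complex.I)] := by
    unfold Udiag
    rw [Matrix.diagonal_map (by simp)]
    refine congrArg Matrix.diagonal ?_
    funext j
    fin_cases j <;> simp [← Complex.exp_conj, Complex.conj_I, mul_comm]
  unfold vecAction
  rw [hmap]
  unfold Udiag
  rw [Matrix.diagonal_kronecker_diagonal, Matrix.diagonal_kronecker_diagonal,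
    Matrix.diagonal_kronecker_diagonal]
  refine congrArg Matrix.diagonal ?_
  funext i
  obtain ⟨⟨a, b⟩, c, d⟩ := i
  fin_cases a <;> fin_cases b <;> fin_cases c <;> fin_cases d <;>
    simp [kappa, ← Complex.exp_add] <;> ring_nf <;> simp

lemma exp_cond (k : ℤ) (θ : ℝ) :
    Complex.exp (2 * k * θ * Complex.I) = 1 ↔ ∃ n : ℤ, (k : ℝ) * θ = n * Real.pi := by
  rw [Complex.exp_eq_one_iff]
  constructor
  · rintro ⟨n, hn⟩
    refine ⟨n, ?_⟩
    have hI : (Complex.I : ℂ) ≠ 0 := Complex.I_ne_zero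
    have h3 : (2*(k:ℂ)*θ) * Complex.I = ((n:ℂ)*(2*Real.pi)) * Complex.I := by
      linear_combination hn
    have h4 := mul_right_cancel₀ hI h3
    have h2 : ((k : ℝ) * θ : ℂ) = ((n * Real.pi : ℝ) : ℂ) := by
      push_cast
      linear_combination h4/2
    exact_mod_cast h2
  · rintro ⟨n, hn⟩
    refine ⟨n, ?_⟩
    have h2 : ((k : ℝ) * θ : ℂ) = ((n * Real.pi : ℝ) : ℂ) := by exact_mod_cast hn
    push_cast at h2
    linear_combination 2 * Complex.I * h2

/-- The operator `U(θ)⊗U(θ)⊗U*(θ)⊗U*(θ) − 𝟙` has eigenvalues only of the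
form `e^{2ikθ} − 1` with `k ∈ {−2,−1,0,1,2}`; hence, for any vectorized two-qubit
state `v`, the set of angles `θ` whose cyclic action fixes `v` is either all of
`ℝ` (a `U(1)` residual symmetry), the multiples of `π` (ℤ₂), or the multiples of
`π/2` (ℤ₄). -/
theorem twoQubit_cyclic_restriction :
    (∀ θ : ℝ, spectrum ℂ (vecAction θ - 1)
        ⊆ {z : ℂ | ∃ k : ℤ, -2 ≤ k ∧ k ≤ 2 ∧
            z = Complex.exp (2 * k * θ * Complex.I) - 1}) ∧
    (∀ v : ((Fin 2 × Fin 2) × (Fin 2 × Fin 2)) → ℂ,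
      {θ : ℝ | (vecAction θ).mulVec v = v} = Set.univ ∨
      {θ : ℝ | (vecAction θ).mulVec v = v} = {θ : ℝ | ∃ m : ℤ, θ = m * Real.pi} ∨
      {θ : ℝ | (vecAction θ).mulVec v = v} = {θ : ℝ | ∃ m : ℤ, θ = m * (Real.pi / 2)}) := by
  constructor
  · intro θ z hz
    have hdiag : vecAction θ - 1 =
        Matrix.diagonal (fun i => Complex.exp (2 * kappa i * θ * Complex.I) - 1) := by
      rw [vecAction_eq_diagonal, ← Matrix.diagonal_one, Matrix.diagonal_sub]
    rw [hdiag, spectrum_diagonal] at hz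
    obtain ⟨i, hi⟩ := hz
    exact ⟨kappa i, (kappa_bounds i).1, (kappa_bounds i).2, hi.symm⟩
  · intro v
    have hmem : ∀ θ : ℝ, (vecAction θ).mulVec v = v ↔
        ∀ i, v i ≠ 0 → ∃ n : ℤ, (kappa i : ℝ) * θ = n * Real.pi := by
      intro θ
      rw [vecAction_eq_diagonal]
      constructor
      · intro h i hi
        have hc := congrFun h i
        rw [Matrix.mulVec_diagonal] at hc
        rw [← exp_cond]
        exact mul_right_cancel₀ hi (by rw [one_mul]; exact hc)
      · intro h
        funext i
        rw [Matrix.mulVec_diagonal]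
        by_cases hi : v i = 0
        · simp [hi]
        · rw [(exp_cond (kappa i) θ).mpr (h i hi), one_mul]
    by_cases h1 : ∃ i, v i ≠ 0 ∧ (kappa i = 1 ∨ kappa i = -1)
    · right; left
      ext θ
      simp only [Set.mem_setOf_eq, hmem]
      constructor
      · intro h
        obtain ⟨i, hv, hk⟩ := h1
        obtain ⟨n, hn⟩ := h i hv
        rcases hk with hk | hk <;> rw [hk] at hn <;> push_cast at hn
        · exact ⟨n, by linarith⟩
        · exact ⟨-n, by push_cast; linarith⟩
      · rintro ⟨m, rfl⟩ i hv
        exact ⟨kappa i * m, by push_cast; ring⟩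
    · by_cases h2 : ∃ i, v i ≠ 0 ∧ (kappa i = 2 ∨ kappa i = -2)
      · right; right
        ext θ
        simp only [Set.mem_setOf_eq, hmem]
        constructor
        · intro h
          obtain ⟨i, hv, hk⟩ := h2
          obtain ⟨n, hn⟩ := h i hv
          rcases hk with hk | hk <;> rw [hk] at hn <;> push_cast at hn
          · exact ⟨n, by linarith⟩
          · exact ⟨-n, by push_cast; linarith⟩
        · rintro ⟨m, rfl⟩ i hv
          push_neg at h1
          have hb := kappa_bounds i
          have h1' := h1 i hv
          have : kappa i = 0 ∨ kappa i = 2 ∨ kappa i = -2 := by omega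
          rcases this with hk | hk | hk <;> rw [hk]
          · exact ⟨0, by push_cast; ring⟩
          · exact ⟨m, by push_cast; ring⟩
          · exact ⟨-m, by push_cast; ring⟩
      · left
        ext θ
        simp only [Set.mem_setOf_eq, Set.mem_univ, iff_true, hmem]
        intro i hv
        push_neg at h1 h2
        have hb := kappa_bounds i
        have h1' := h1 i hv
        have h2' := h2 i hv
        have hk : kappa i = 0 := by omega
        exact ⟨0, by rw [hk]; push_cast; ring⟩
end
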